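/- If D is a strongly connected finite digraph with exactly three complementarity eigenvalues containing a θ(a,b,c)-subdigraph, then D has exactly a + b + c + 2 vertices. -/

import Mathlib

open Matrix
open scoped Classical

noncomputable section

/-- Adjacency matrix of a digraph given by an arc relation `E`. -/
def adjMat {V : Type*} (E : V → V → Prop) : Matrix V V ℝ :=
  Matrix.of fun i j => if E i j then (1 : ℝ) else 0

/-- Spectral radius of a real square matrix: the largest modulus of a (complex) eigenvalue. -/
def matSpecRad {n : Type*} [Fintype n] (A : Matrix n n ℝ) : ℝ :=
  sSup {r : ℝ | ∃ μ ∈ spectrum ℂ (A.map (fun x => (x : ℂ))), r = ‖μ‖}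

/-- Spectral radius of a digraph. -/
def rho {V : Type*} [Fintype V] (E : V → V → Prop) : ℝ :=
  matSpecRad (adjMat E)

/-- The complementarity spectrum of a real square matrix. -/
def compSpec {n : Type*} [Fintype n] (A : Matrix n n ℝ) : Set ℝ :=
  {lam | ∃ x : n → ℝ, x ≠ 0 ∧ 0 ≤ x ∧ 0 ≤ A.mulVec x - lam • x ∧
    x ⬝ᵥ (A.mulVec x - lam • x) = 0}

/-- Reachability by directed paths. -/
def Reach {V : Type*} (E : V → V → Prop) : V → V → Prop :=
  Relation.ReflTransGen E

/-- A digraph is strongly connected if every vertex reaches every other one. -/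
def StronglyConnected {V : Type*} (E : V → V → Prop) : Prop :=
  ∀ u v, Reach E u v

/-- Induced subdigraph on a vertex subset `S`. -/
def induceRel {V : Type*} (E : V → V → Prop) (S : Set V) : S → S → Prop :=
  fun a b => E a.1 b.1

/-- Spectral radius of the induced subdigraph on `S`. -/
def specRadOn {V : Type*} [Fintype V] (E : V → V → Prop) (S : Set V) : ℝ :=
  @rho S (Set.Finite.fintype S.toFinite) (induceRel E S)

/-- Complementarity spectrum of the induced subdigraph on `S`. -/
def compSpecOn {V : Type*} [Fintype V] (E : V → V → Prop) (S : Set V) : Set ℝ :=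
  @compSpec S (Set.Finite.fintype S.toFinite) (adjMat (induceRel E S))

/-- Isomorphism of digraphs. -/
def IsoDigraph {V W : Type*} (E : V → V → Prop) (F : W → W → Prop) : Prop :=
  ∃ e : V ≃ W, ∀ a b, E a b ↔ F (e a) (e b)

/-- The directed cycle on `n` vertices. -/
def cycleRel (n : ℕ) : ZMod n → ZMod n → Prop := fun i j => j = i + 1

/-- A digraph is a directed cycle if it is isomorphic to some `C⃗_n`, `n ≥ 2`. -/
def IsCycleDigraph {V : Type*} (E : V → V → Prop) : Prop :=
  ∃ n : ℕ, 2 ≤ n ∧ IsoDigraph E (cycleRel n)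

/-- A digraph is acyclic if it has no directed cycle. -/
def Acyclic {V : Type*} (E : V → V → Prop) : Prop :=
  ∀ v, ¬ Relation.TransGen E v v

/-- Strongly connected component of the vertex `v`. -/
def component {V : Type*} (E : V → V → Prop) (v : V) : Set V :=
  {u | Reach E u v ∧ Reach E v u}

/-- `D` has an `∞(r,s)`-subdigraph: two directed cycles of lengths `r` and `s`
sharing exactly one vertex, all of whose arcs are arcs of `D`. -/
def InftySub {V : Type*} (E : V → V → Prop) (r s : ℕ) : Prop :=
  ∃ (f : ZMod r → V) (g : ZMod s → V),
    Function.Injective f ∧ Function.Injective g ∧ f 0 = g 0 ∧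
    Set.range f ∩ Set.range g = {f 0} ∧
    (∀ i, E (f i) (f (i + 1))) ∧ (∀ j, E (g j) (g (j + 1)))

/-- `D` has a `θ(a,b,c)`-subdigraph: three internally disjoint directed paths,
two from `v` to `w` (of lengths `a+1` and `b+1`) and one from `w` to `v`
(of length `c+1`), all of whose arcs are arcs of `D`. -/
def ThetaSub {V : Type*} (E : V → V → Prop) (a b c : ℕ) : Prop :=
  ∃ (P : Fin (a + 2) → V) (Q : Fin (b + 2) → V) (R : Fin (c + 2) → V),
    Function.Injective P ∧ Function.Injective Q ∧ Function.Injective R ∧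
    P 0 = Q 0 ∧ Q 0 = R (Fin.last (c + 1)) ∧
    P (Fin.last (a + 1)) = Q (Fin.last (b + 1)) ∧ Q (Fin.last (b + 1)) = R 0 ∧
    (∀ i j, P i = Q j → (i = 0 ∧ j = 0) ∨ (i = Fin.last (a + 1) ∧ j = Fin.last (b + 1))) ∧
    (∀ i j, P i = R j → (i = 0 ∧ j = Fin.last (c + 1)) ∨ (i = Fin.last (a + 1) ∧ j = 0)) ∧
    (∀ i j, Q i = R j → (i = 0 ∧ j = Fin.last (c + 1)) ∨ (i = Fin.last (b + 1) ∧ j = 0)) ∧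
    (∀ i : Fin (a + 1), E (P i.castSucc) (P i.succ)) ∧
    (∀ i : Fin (b + 1), E (Q i.castSucc) (Q i.succ)) ∧
    (∀ i : Fin (c + 1), E (R i.castSucc) (R i.succ))

/-- `D` is (isomorphic to) the `∞(r,s)` digraph: the coalescence of the directed
cycles `C⃗_r` and `C⃗_s` at one vertex, with no further vertices or arcs. -/
def IsInftyDigraph {V : Type*} (E : V → V → Prop) (r s : ℕ) : Prop :=
  ∃ (f : ZMod r → V) (g : ZMod s → V),
    Function.Injective f ∧ Function.Injective g ∧ f 0 = g 0 ∧
    Set.range f ∩ Set.range g = {f 0} ∧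
    Set.range f ∪ Set.range g = Set.univ ∧
    ∀ u v, E u v ↔ ((∃ i, u = f i ∧ v = f (i + 1)) ∨ (∃ j, u = g j ∧ v = g (j + 1)))

/-- `D` is (isomorphic to) the `θ(a,b,c)` digraph: three internally disjoint
directed paths, two from `v` to `w` and one from `w` to `v`, with no further
vertices or arcs. -/
def IsThetaDigraph {V : Type*} (E : V → V → Prop) (a b c : ℕ) : Prop :=
  ∃ (P : Fin (a + 2) → V) (Q : Fin (b + 2) → V) (R : Fin (c + 2) → V),
    Function.Injective P ∧ Function.Injective Q ∧ Function.Injective R ∧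
    P 0 = Q 0 ∧ Q 0 = R (Fin.last (c + 1)) ∧
    P (Fin.last (a + 1)) = Q (Fin.last (b + 1)) ∧ Q (Fin.last (b + 1)) = R 0 ∧
    (∀ i j, P i = Q j → (i = 0 ∧ j = 0) ∨ (i = Fin.last (a + 1) ∧ j = Fin.last (b + 1))) ∧
    (∀ i j, P i = R j → (i = 0 ∧ j = Fin.last (c + 1)) ∨ (i = Fin.last (a + 1) ∧ j = 0)) ∧
    (∀ i j, Q i = R j → (i = 0 ∧ j = Fin.last (c + 1)) ∨ (i = Fin.last (b + 1) ∧ j = 0)) ∧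
    Set.range P ∪ Set.range Q ∪ Set.range R = Set.univ ∧
    (∀ u v, E u v ↔
      ((∃ i : Fin (a + 1), u = P i.castSucc ∧ v = P i.succ) ∨
       (∃ i : Fin (b + 1), u = Q i.castSucc ∧ v = Q i.succ) ∨
       (∃ i : Fin (c + 1), u = R i.castSucc ∧ v = R i.succ)))

/-!
Let `T` be the vertex set of the `θ`-subdigraph. It induces a strongly connected subdigraph in
which the first branch vertex has two out-neighbours. If `T ≠ V`, then `0` (a single vertex),
`1` (a chordless directed cycle), the Perron root `ρ_T` of `D[T]` and the Perron root `ρ` of `D`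
are complementarity eigenvalues, and `1 < ρ_T < ρ`: in both cases a nonnegative vector `x`
satisfies `s • x < A *ᵥ x` for the smaller value `s`, and pairing with a positive left Perron
vector of `A` makes the inequality strict. So `D` would have four complementarity eigenvalues.
-/

namespace Matrix

variable {n : Type*} [Fintype n]

lemma pos_mulVec_of_pos {B : Matrix n n ℝ} (hB : ∀ i j, 0 < B i j) {x : n → ℝ}
    (hx : 0 ≤ x) (hx0 : x ≠ 0) (i : n) : 0 < (B *ᵥ x) i := by
  obtain ⟨j, hj⟩ := Function.ne_iff.1 hx0
  exact Finset.sum_pos' (fun k _ => mul_nonneg (hB i k).le (hx k))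
    ⟨j, Finset.mem_univ j, mul_pos (hB i j) ((hx j).lt_of_ne' hj)⟩

lemma exists_commute_pos_of_pow_pos {A : Matrix n n ℝ} (hA : ∀ i j, 0 ≤ A i j)
    (hirr : ∀ i j, ∃ k, 0 < (A ^ k) i j) :
    ∃ B : Matrix n n ℝ, Commute A B ∧ ∀ i j, 0 < B i j := by
  choose k hk using hirr
  set N := Finset.univ.sup fun p : n × n => k p.1 p.2
  refine ⟨∑ m ∈ Finset.range (N + 1), A ^ m,
    Commute.sum_right _ _ _ fun m _ => Commute.self_pow A m, fun i j => ?_⟩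
  rw [Matrix.sum_apply]
  have hkN : k i j ≤ N :=
    Finset.le_sup (f := fun p : n × n => k p.1 p.2) (Finset.mem_univ (i, j))
  exact Finset.sum_pos' (fun m _ => pow_apply_nonneg hA m i j)
    ⟨k i j, Finset.mem_range.2 (Nat.lt_succ_of_le hkN), hk i j⟩

lemma le_sum_apply_of_smul_le_mulVec {A : Matrix n n ℝ} (hA : ∀ i j, 0 ≤ A i j) {r : ℝ}
    {x : n → ℝ} (hx : x ∈ stdSimplex ℝ n) (h : r • x ≤ A *ᵥ x) : r ≤ ∑ i, ∑ j, A i j :=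
  calc r = ∑ i, r * x i := by rw [← Finset.mul_sum, hx.2, mul_one]
    _ ≤ ∑ i, (A *ᵥ x) i := Finset.sum_le_sum fun i _ => h i
    _ ≤ ∑ i, ∑ j, A i j := Finset.sum_le_sum fun i _ => Finset.sum_le_sum fun j _ =>
        mul_le_of_le_one_right (hA i j) (stdSimplex.le_one ⟨x, hx⟩ j)

lemma exists_pos_mul_le_of_pos [Nonempty n] {z w : n → ℝ} (hz : ∀ i, 0 < z i)
    (hw : ∀ i, 0 < w i) : ∃ ε > 0, ∀ i, ε * z i ≤ w i := by
  obtain ⟨i₀, hi₀⟩ := Finite.exists_min fun i => w i / z i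
  exact ⟨w i₀ / z i₀, div_pos (hw i₀) (hz i₀), fun i => (le_div_iff₀ (hz i)).1 (hi₀ i)⟩

/-- Perron–Frobenius: `r` is the largest value of the Collatz–Wielandt function on the simplex,
attained at some `x`; smoothing `x` by a positive matrix `B` commuting with `A` yields a
positive vector, which must be an eigenvector since otherwise `r` could be increased. -/
theorem exists_pos_mulVec_eq_smul [Nonempty n] {A : Matrix n n ℝ} (hA : ∀ i j, 0 ≤ A i j)
    (hirr : ∀ i j, ∃ k, 0 < (A ^ k) i j) :
    ∃ (r : ℝ) (x : n → ℝ), (∀ i, 0 < x i) ∧ A *ᵥ x = r • x := by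
  set K : Set (ℝ × (n → ℝ)) :=
    Set.Icc 0 (∑ i, ∑ j, A i j) ×ˢ stdSimplex ℝ n ∩ {p | p.1 • p.2 ≤ A *ᵥ p.2}
  have hK : IsCompact K := (isCompact_Icc.prod (isCompact_stdSimplex ℝ n)).inter_right
    (isClosed_le (by fun_prop) (continuous_const.matrix_mulVec continuous_snd))
  have hK0 : ((0 : ℝ), Pi.single (Classical.arbitrary n) 1) ∈ K := by
    refine ⟨⟨⟨le_rfl, Finset.sum_nonneg fun i _ => Finset.sum_nonneg fun j _ => hA i j⟩,
      single_mem_stdSimplex ℝ _⟩, ?_⟩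
    rw [Set.mem_ofPred_eq, zero_smul, mulVec_single_one]
    exact fun i => hA i _
  obtain ⟨⟨r, x⟩, ⟨⟨⟨hr, -⟩, hx⟩, hrx⟩, hmax⟩ :=
    hK.exists_isMaxOn ⟨_, hK0⟩ continuous_fst.continuousOn
  have hle : ∀ s, 0 ≤ s → ∀ z ∈ stdSimplex ℝ n, s • z ≤ A *ᵥ z → s ≤ r := fun s hs z hz h =>
    hmax (a := (s, z)) ⟨⟨⟨hs, le_sum_apply_of_smul_le_mulVec hA hz h⟩, hz⟩, h⟩
  obtain ⟨B, hAB, hB⟩ := exists_commute_pos_of_pow_pos hA hirr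
  have hx0 : x ≠ 0 := by
    rintro rfl
    simpa using hx.2
  set z := B *ᵥ x
  have hz : ∀ i, 0 < z i := pos_mulVec_of_pos hB hx.1 hx0
  refine ⟨r, z, hz, ?_⟩
  have hAz : A *ᵥ z = r • z + B *ᵥ (A *ᵥ x - r • x) := by
    simp only [z, mulVec_sub, mulVec_smul, mulVec_mulVec, hAB.eq]
    abel
  by_contra hne
  have hy : A *ᵥ x - r • x ≠ 0 := fun h => hne (by rw [hAz, h, mulVec_zero, add_zero])
  obtain ⟨ε, hε, hεz⟩ :=
    exists_pos_mul_le_of_pos hz (pos_mulVec_of_pos hB (sub_nonneg.2 hrx) hy)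
  -- `(r + ε) • z ≤ A *ᵥ z`, so the normalisation of `z` beats the maximum `r`
  set t := (∑ i, z i)⁻¹
  have hsum : 0 < ∑ i, z i := Finset.sum_pos (fun i _ => hz i) Finset.univ_nonempty
  have ht : 0 < t := inv_pos.2 hsum
  have hmem : t • z ∈ stdSimplex ℝ n :=
    ⟨fun i => mul_nonneg ht.le (hz i).le, by simp [t, ← Finset.mul_sum, hsum.ne']⟩
  have hrε : (r + ε) • (t • z) ≤ A *ᵥ (t • z) := by
    rw [mulVec_smul, smul_comm]
    refine smul_le_smul_of_nonneg_left (fun i => ?_) ht.le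
    rw [hAz]
    simp only [Pi.add_apply, Pi.smul_apply, smul_eq_mul, add_mul]
    linarith [hεz i]
  linarith [hle (r + ε) (by linarith) _ hmem hrε]

theorem exists_perron_pair [Nonempty n] {A : Matrix n n ℝ} (hA : ∀ i j, 0 ≤ A i j)
    (hirr : ∀ i j, ∃ k, 0 < (A ^ k) i j) :
    ∃ (r : ℝ) (x y : n → ℝ), (∀ i, 0 < x i) ∧ (∀ i, 0 < y i) ∧
      A *ᵥ x = r • x ∧ y ᵥ* A = r • y := by
  obtain ⟨r, x, hx, hAx⟩ := exists_pos_mulVec_eq_smul hA hirr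
  obtain ⟨s, y, hy, hyA⟩ := exists_pos_mulVec_eq_smul (A := Aᵀ) (fun i j => hA j i)
    (fun i j => by simpa only [← transpose_pow, transpose_apply] using hirr j i)
  rw [mulVec_transpose] at hyA
  have hyx : 0 < y ⬝ᵥ x := Finset.sum_pos (fun i _ => mul_pos (hy i) (hx i)) Finset.univ_nonempty
  have hsr : s = r := by
    have h := dotProduct_mulVec y A x
    rw [hAx, hyA, dotProduct_smul, smul_dotProduct, smul_eq_mul, smul_eq_mul] at h
    exact (mul_right_cancel₀ hyx.ne' h).symm
  exact ⟨r, x, y, hx, hy, hAx, hsr ▸ hyA⟩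

theorem lt_of_smul_lt_mulVec {A : Matrix n n ℝ} {r s : ℝ} {x y : n → ℝ} (hy : ∀ i, 0 < y i)
    (hyA : y ᵥ* A = r • y) (hx : 0 ≤ x) (h : s • x < A *ᵥ x) : s < r := by
  obtain ⟨hle, i, hi⟩ := Pi.lt_def.1 h
  have hpos : 0 < y ⬝ᵥ (A *ᵥ x - s • x) :=
    Finset.sum_pos' (fun j _ => mul_nonneg (hy j).le (sub_nonneg.2 (hle j)))
      ⟨i, Finset.mem_univ i, mul_pos (hy i) (sub_pos.2 hi)⟩
  have hyx : 0 ≤ y ⬝ᵥ x := Finset.sum_nonneg fun j _ => mul_nonneg (hy j).le (hx j)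
  rw [dotProduct_sub, dotProduct_mulVec, hyA, smul_dotProduct, dotProduct_smul, smul_eq_mul,
    smul_eq_mul, ← sub_mul] at hpos
  exact sub_pos.1 (pos_of_mul_pos_left hpos hyx)

lemma mem_compSpec_of_mulVec_eq {A : Matrix n n ℝ} (hA : ∀ i j, 0 ≤ A i j) {r : ℝ}
    {x : n → ℝ} (hx : 0 ≤ x) (hx0 : x ≠ 0) (h : ∀ i, 0 < x i → (A *ᵥ x) i = r * x i) :
    r ∈ compSpec A := by
  have hzero : ∀ i, x i = 0 → (A *ᵥ x - r • x) i = (A *ᵥ x) i := fun i hi => by simp [hi]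
  refine ⟨x, hx0, hx, fun i => ?_, Finset.sum_eq_zero fun i _ => ?_⟩
  · rcases (hx i).lt_or_eq with hi | hi
    · simp [h i hi]
    · rw [Pi.zero_apply, hzero i hi.symm]
      exact Finset.sum_nonneg fun j _ => mul_nonneg (hA i j) (hx j)
  · rcases (hx i).lt_or_eq with hi | hi
    · simp [h i hi]
    · simp [← hi]

end Matrix

section Digraph

variable {V : Type*} {E : V → V → Prop}

lemma StronglyConnected.exists_adj [Nontrivial V] (h : StronglyConnected E) (v : V) :
    ∃ u, E v u := by
  obtain ⟨w, hw⟩ := exists_ne v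
  rcases (h v w).cases_head with rfl | ⟨u, hu, -⟩
  · exact absurd rfl hw
  · exact ⟨u, hu⟩

lemma exists_adj_entering {S : Set V} {u t : V} (h : Reach E u t) (hu : u ∉ S) (ht : t ∈ S) :
    ∃ b ∉ S, ∃ a ∈ S, E b a := by
  induction h with
  | refl => exact absurd ht hu
  | @tail c d _ hcd ih =>
    by_cases hc : c ∈ S
    · exact ih hc
    · exact ⟨c, hc, d, ht, hcd⟩

def extendByZero (S : Set V) (x : S → ℝ) : V → ℝ :=
  fun v => if h : v ∈ S then x ⟨v, h⟩ else 0

section ExtendByZero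

variable {S : Set V} {x : S → ℝ}

lemma extendByZero_of_mem {v : V} (hv : v ∈ S) : extendByZero S x v = x ⟨v, hv⟩ := dif_pos hv

lemma extendByZero_of_notMem {v : V} (hv : v ∉ S) : extendByZero S x v = 0 := dif_neg hv

lemma extendByZero_nonneg (hx : ∀ s, 0 < x s) : 0 ≤ extendByZero S x := fun v => by
  by_cases hv : v ∈ S
  · exact (extendByZero_of_mem hv).symm ▸ (hx _).le
  · exact (extendByZero_of_notMem hv).symm ▸ le_rfl

end ExtendByZero

lemma adjMat_nonneg (E : V → V → Prop) (u v : V) : 0 ≤ adjMat E u v := by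
  simp only [adjMat, of_apply]
  split_ifs <;> norm_num

variable [Fintype V]

lemma adjMat_mulVec_apply (E : V → V → Prop) (x : V → ℝ) (v : V) :
    (adjMat E *ᵥ x) v = ∑ u, if E v u then x u else 0 := by
  simp only [mulVec, dotProduct, adjMat, of_apply, ite_mul, one_mul, zero_mul]

lemma pow_adjMat_pos_of_reach {u v : V} (h : Reach E u v) : ∃ k, 0 < (adjMat E ^ k) u v := by
  induction h with
  | refl => exact ⟨0, by simp⟩
  | @tail c d _ hcd ih =>
    obtain ⟨k, hk⟩ := ih
    refine ⟨k + 1, ?_⟩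
    rw [pow_succ, mul_apply]
    exact Finset.sum_pos' (fun w _ => mul_nonneg (pow_apply_nonneg (adjMat_nonneg E) k u w)
      (adjMat_nonneg E w d)) ⟨c, Finset.mem_univ c, mul_pos hk (by simp [adjMat, hcd])⟩

theorem StronglyConnected.exists_perron_pair [Nonempty V] (h : StronglyConnected E) :
    ∃ (r : ℝ) (x y : V → ℝ), (∀ v, 0 < x v) ∧ (∀ v, 0 < y v) ∧
      adjMat E *ᵥ x = r • x ∧ y ᵥ* adjMat E = r • y :=
  Matrix.exists_perron_pair (adjMat_nonneg E) fun u v => pow_adjMat_pos_of_reach (h u v)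

lemma one_lt_adjMat_mulVec_one (hout : ∀ v, ∃ u, E v u) {v u₁ u₂ : V} (hne : u₁ ≠ u₂)
    (h₁ : E v u₁) (h₂ : E v u₂) : (1 : V → ℝ) < adjMat E *ᵥ 1 := by
  have hcard : ∀ w, (adjMat E *ᵥ 1) w = (Finset.univ.filter (E w)).card := fun w => by
    simp only [adjMat_mulVec_apply, Pi.one_apply, Finset.sum_boole]
  refine Pi.lt_def.2 ⟨fun w => ?_, v, ?_⟩
  · obtain ⟨u, hu⟩ := hout w
    rw [hcard, Pi.one_apply, Nat.one_le_cast, Nat.one_le_iff_ne_zero, Ne, Finset.card_eq_zero]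
    exact Finset.nonempty_iff_ne_empty.1 ⟨u, by simpa using hu⟩
  · rw [hcard, Pi.one_apply, Nat.one_lt_cast, Finset.one_lt_card]
    exact ⟨u₁, by simpa using h₁, u₂, by simpa using h₂, hne⟩

lemma zero_mem_compSpec (hloop : ∀ v, ¬ E v v) (v : V) : (0 : ℝ) ∈ compSpec (adjMat E) := by
  refine mem_compSpec_of_mulVec_eq (x := Pi.single v 1) (adjMat_nonneg E)
    (Pi.single_nonneg.2 zero_le_one) (by simp) fun u hu => ?_
  obtain rfl : u = v := by
    by_contra huv
    simp [huv] at hu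
  simp [adjMat, hloop]

/-- A minimal nonempty set in which every vertex has an out-neighbour spans a directed cycle with
no chords: every choice of out-neighbours maps it onto a nonempty set of the same kind, hence
bijectively onto itself, and this forces the out-neighbour to be unique. -/
lemma exists_finset_existsUnique_adj [Nonempty V] (hout : ∀ v, ∃ u, E v u) :
    ∃ s : Finset V, s.Nonempty ∧ ∀ v ∈ s, ∃! u, u ∈ s ∧ E v u := by
  let Closed : Finset V → Prop := fun s => s.Nonempty ∧ ∀ v ∈ s, ∃ u ∈ s, E v u
  obtain ⟨s, hs, hmin⟩ : ∃ s, Closed s ∧ ∀ t, Closed t → s.card ≤ t.card := by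
    obtain ⟨s, hs, hmin⟩ := (Finset.univ.filter Closed).exists_min_image Finset.card
      ⟨Finset.univ, by simpa [Closed] using hout⟩
    exact ⟨s, (Finset.mem_filter.1 hs).2, fun t ht => hmin t (by simpa using ht)⟩
  have himage : ∀ f : V → V, (∀ v ∈ s, f v ∈ s ∧ E v (f v)) → s.image f = s := by
    intro f hf
    have hsub : s.image f ⊆ s := fun w hw => by
      obtain ⟨v, hv, rfl⟩ := Finset.mem_image.1 hw
      exact (hf v hv).1
    refine Finset.eq_of_subset_of_card_le hsub (hmin _ ⟨hs.1.image f, fun w hw => ?_⟩)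
    exact ⟨f w, Finset.mem_image_of_mem f (hsub hw), (hf w (hsub hw)).2⟩
  choose! g hg using hs.2
  have hginj : Set.InjOn g s := Finset.injOn_of_card_image_eq (by rw [himage g hg])
  refine ⟨s, hs.1, fun v hv => ⟨g v, hg v hv, fun u ⟨hu, hvu⟩ => ?_⟩⟩
  by_contra hne
  let f := Function.update g v u
  have hf : ∀ w ∈ s, f w ∈ s ∧ E w (f w) := fun w hw => by
    by_cases hwv : w = v
    · subst hwv; simpa [f] using ⟨hu, hvu⟩
    · simpa [f, hwv] using hg w hw
  obtain ⟨p, hp, hpv⟩ := Finset.mem_image.1 ((himage f hf).symm ▸ (hg v hv).1)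
  have hpv' : p ≠ v := by
    rintro rfl
    exact hne (by simpa [f] using hpv)
  exact hpv' (hginj hp hv (by simpa [f, hpv'] using hpv))

lemma one_mem_compSpec [Nonempty V] (hout : ∀ v, ∃ u, E v u) : (1 : ℝ) ∈ compSpec (adjMat E) := by
  obtain ⟨s, ⟨v₀, hv₀⟩, hs⟩ := exists_finset_existsUnique_adj hout
  refine mem_compSpec_of_mulVec_eq (x := fun v => if v ∈ s then 1 else 0) (adjMat_nonneg E)
    (fun v => by positivity) (Function.ne_iff.2 ⟨v₀, by simp [hv₀]⟩) fun v hv => ?_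
  have hvs : v ∈ s := by
    by_contra h
    simp [h] at hv
  obtain ⟨u, ⟨hu, hvu⟩, huniq⟩ := hs v hvs
  rw [adjMat_mulVec_apply, Fintype.sum_eq_single u fun w hw => ?_]
  · simp [hu, hvu, hvs]
  · by_cases hvw : E v w
    · simp [hvw, show w ∉ s from fun h => hw (huniq w ⟨h, hvw⟩)]
    · simp [hvw]

section Induced

variable {S : Set V} {x : S → ℝ}

lemma adjMat_mulVec_extendByZero {v : V} (hv : v ∈ S) :
    (adjMat E *ᵥ extendByZero S x) v = (adjMat (induceRel E S) *ᵥ x) ⟨v, hv⟩ := by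
  rw [adjMat_mulVec_apply, adjMat_mulVec_apply, ← Fintype.sum_subtype_add_sum_subtype (· ∈ S),
    Fintype.sum_eq_zero (f := fun u : {u // u ∉ S} => _)
      fun u => by simp [extendByZero_of_notMem u.2], add_zero]
  simp only [extendByZero_of_mem, Subtype.coe_prop, induceRel]
  congr! 1

theorem mem_compSpec_of_induced [Nonempty S] {r : ℝ} (hx : ∀ s, 0 < x s)
    (h : adjMat (induceRel E S) *ᵥ x = r • x) : r ∈ compSpec (adjMat E) := by
  obtain ⟨s⟩ := ‹Nonempty S›
  refine mem_compSpec_of_mulVec_eq (adjMat_nonneg E) (extendByZero_nonneg hx)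
    (Function.ne_iff.2 ⟨s, by simp [extendByZero_of_mem s.2, (hx s).ne']⟩) fun v hv => ?_
  have hvS : v ∈ S := by
    by_contra h
    simp [extendByZero_of_notMem h] at hv
  rw [adjMat_mulVec_extendByZero hvS, h, extendByZero_of_mem hvS, Pi.smul_apply, smul_eq_mul]

lemma smul_extendByZero_lt_adjMat_mulVec {r : ℝ} (hx : ∀ s, 0 < x s)
    (h : adjMat (induceRel E S) *ᵥ x = r • x) {a b : V} (hb : b ∉ S) (ha : a ∈ S) (hba : E b a) :
    r • extendByZero S x < adjMat E *ᵥ extendByZero S x := by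
  refine Pi.lt_def.2 ⟨fun v => ?_, b, ?_⟩
  · by_cases hv : v ∈ S
    · rw [adjMat_mulVec_extendByZero hv, h, Pi.smul_apply, extendByZero_of_mem hv]
      exact le_rfl
    · rw [Pi.smul_apply, extendByZero_of_notMem hv, smul_zero]
      exact Finset.sum_nonneg fun u _ => mul_nonneg (adjMat_nonneg E v u) (extendByZero_nonneg hx u)
  · rw [Pi.smul_apply, extendByZero_of_notMem hb, smul_zero, adjMat_mulVec_apply]
    refine Finset.sum_pos' (fun u _ => ?_) ⟨a, Finset.mem_univ a, ?_⟩
    · split_ifs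
      exacts [extendByZero_nonneg hx u, le_rfl]
    · rw [if_pos hba, extendByZero_of_mem ha]
      exact hx _

end Induced

end Digraph

theorem eq_univ_of_ncard_compSpec_eq_three {V : Type*} [Fintype V] {E : V → V → Prop}
    (hloop : ∀ v, ¬ E v v) (hsc : StronglyConnected E) (h3 : (compSpec (adjMat E)).ncard = 3)
    {T : Set V} (hT : StronglyConnected (induceRel E T)) {v u₁ u₂ : T} (hne : u₁ ≠ u₂)
    (h₁ : induceRel E T v u₁) (h₂ : induceRel E T v u₂) : T = Set.univ := by
  by_contra hTV
  obtain ⟨w, hw⟩ := (Set.ne_univ_iff_exists_notMem T).1 hTV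
  have : Nontrivial T := ⟨⟨u₁, u₂, hne⟩⟩
  have : Nontrivial V := ⟨⟨u₁, u₂, Subtype.coe_injective.ne hne⟩⟩
  obtain ⟨r, x, y, hx, hy, hAx, hyA⟩ := hsc.exists_perron_pair
  obtain ⟨rT, xT, yT, hxT, hyT, hAxT, hyAT⟩ := hT.exists_perron_pair
  obtain ⟨b, hb, a, ha, hba⟩ := exists_adj_entering (hsc w v) hw v.2
  have h1rT : 1 < rT := lt_of_smul_lt_mulVec hyT hyAT zero_le_one
    (by rw [one_smul]; exact one_lt_adjMat_mulVec_one hT.exists_adj hne h₁ h₂)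
  have hrTr : rT < r := lt_of_smul_lt_mulVec hy hyA (extendByZero_nonneg hxT)
    (smul_extendByZero_lt_adjMat_mulVec hxT hAxT hb ha hba)
  have hsub : ({0, 1, rT, r} : Set ℝ) ⊆ compSpec (adjMat E) := by
    rintro _ (rfl | rfl | rfl | rfl)
    · exact zero_mem_compSpec hloop w
    · exact one_mem_compSpec hsc.exists_adj
    · exact mem_compSpec_of_induced hxT hAxT
    · exact mem_compSpec_of_mulVec_eq (adjMat_nonneg E) (fun v => (hx v).le)
        (Function.ne_iff.2 ⟨w, (hx w).ne'⟩) fun v _ => by rw [hAx, Pi.smul_apply, smul_eq_mul]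
  have h4 : ({0, 1, rT, r} : Set ℝ).ncard = 4 := by
    rw [Set.ncard_insert_of_notMem, Set.ncard_insert_of_notMem, Set.ncard_pair hrTr.ne]
    · simp only [Set.mem_insert_iff, Set.mem_singleton_iff, not_or]
      constructor <;> linarith
    · simp only [Set.mem_insert_iff, Set.mem_singleton_iff, not_or]
      refine ⟨?_, ?_, ?_⟩ <;> linarith
  have := Set.ncard_le_ncard hsub (Set.finite_of_ncard_pos (by omega))
  omega

section Theta

variable {V : Type*}

lemma reach_of_fin_path {r : V → V → Prop} {m : ℕ} {f : Fin (m + 1) → V}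
    (hf : ∀ i : Fin m, r (f i.castSucc) (f i.succ)) {i j : Fin (m + 1)} (hij : i ≤ j) :
    Reach r (f i) (f j) := by
  induction j using Fin.induction with
  | zero =>
    obtain rfl := Fin.le_zero_iff.1 hij
    exact .refl
  | succ k ih =>
    rcases hij.lt_or_eq with hlt | rfl
    · exact (ih (Fin.le_castSucc_iff.2 hlt)).tail (hf k)
    · exact .refl

lemma stronglyConnected_of_hub {r : V → V → Prop} (w : V) (hto : ∀ u, Reach r u w)
    (hfrom : ∀ u, Reach r w u) : StronglyConnected r :=
  fun u v => (hto u).trans (hfrom v)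

/-- Inclusion–exclusion: any two of the paths share exactly the two branch vertices. -/
lemma ncard_theta {a b c : ℕ} {P : Fin (a + 2) → V} {Q : Fin (b + 2) → V}
    {R : Fin (c + 2) → V} (hP : Function.Injective P) (hQ : Function.Injective Q)
    (hR : Function.Injective R) (hPQ0 : P 0 = Q 0) (hQR0 : Q 0 = R (Fin.last (c + 1)))
    (hPQl : P (Fin.last (a + 1)) = Q (Fin.last (b + 1))) (hQRl : Q (Fin.last (b + 1)) = R 0)
    (hPQ : ∀ i j, P i = Q j → (i = 0 ∧ j = 0) ∨ (i = Fin.last (a + 1) ∧ j = Fin.last (b + 1)))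
    (hPR : ∀ i j, P i = R j → (i = 0 ∧ j = Fin.last (c + 1)) ∨ (i = Fin.last (a + 1) ∧ j = 0))
    (hQR : ∀ i j, Q i = R j → (i = 0 ∧ j = Fin.last (c + 1)) ∨ (i = Fin.last (b + 1) ∧ j = 0)) :
    (Set.range P ∪ Set.range Q ∪ Set.range R).ncard = a + b + c + 2 := by
  have hPQi : Set.range P ∩ Set.range Q = {P 0, P (Fin.last (a + 1))} := by
    ext v
    constructor
    · rintro ⟨⟨i, rfl⟩, j, hj⟩
      rcases hPQ i j hj.symm with ⟨rfl, -⟩ | ⟨rfl, -⟩ <;> simp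
    · rintro (rfl | rfl)
      exacts [⟨⟨0, rfl⟩, 0, hPQ0.symm⟩, ⟨⟨_, rfl⟩, _, hPQl.symm⟩]
  have hPQRi : (Set.range P ∪ Set.range Q) ∩ Set.range R = {P 0, P (Fin.last (a + 1))} := by
    ext v
    constructor
    · rintro ⟨⟨i, rfl⟩ | ⟨i, rfl⟩, j, hj⟩
      · rcases hPR i j hj.symm with ⟨rfl, -⟩ | ⟨rfl, -⟩ <;> simp
      · rcases hQR i j hj.symm with ⟨rfl, -⟩ | ⟨rfl, -⟩ <;> simp [hPQ0, hPQl]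
    · rintro (rfl | rfl)
      exacts [⟨Or.inl ⟨0, rfl⟩, _, (hPQ0.trans hQR0).symm⟩,
        ⟨Or.inl ⟨_, rfl⟩, 0, (hPQl.trans hQRl).symm⟩]
  have hpair : ({P 0, P (Fin.last (a + 1))} : Set V).ncard = 2 :=
    Set.ncard_pair (hP.ne (Fin.ext_iff.not.2 (by simp)))
  have h1 := Set.ncard_union_add_ncard_inter (Set.range P) (Set.range Q)
  have h2 := Set.ncard_union_add_ncard_inter (Set.range P ∪ Set.range Q) (Set.range R)
  rw [hPQi, hpair, Set.ncard_range_of_injective hP, Set.ncard_range_of_injective hQ] at h1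
  rw [hPQRi, hpair, Set.ncard_range_of_injective hR] at h2
  simp only [Nat.card_eq_fintype_card, Fintype.card_fin] at h1 h2
  omega

theorem ThetaSub.exists_induced {E : V → V → Prop} {a b c : ℕ} (hsub : ThetaSub E a b c)
    (hb : 0 < b) :
    ∃ T : Set V, T.ncard = a + b + c + 2 ∧ StronglyConnected (induceRel E T) ∧
      ∃ v u₁ u₂ : T, u₁ ≠ u₂ ∧ induceRel E T v u₁ ∧ induceRel E T v u₂ := by
  obtain ⟨P, Q, R, hP, hQ, hR, hPQ0, hQR0, hPQl, hQRl, hPQ, hPR, hQR, hPe, hQe, hRe⟩ := hsub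
  set T := Set.range P ∪ Set.range Q ∪ Set.range R
  let P' : Fin (a + 2) → T := fun i => ⟨P i, Or.inl (Or.inl ⟨i, rfl⟩)⟩
  let Q' : Fin (b + 2) → T := fun i => ⟨Q i, Or.inl (Or.inr ⟨i, rfl⟩)⟩
  let R' : Fin (c + 2) → T := fun i => ⟨R i, Or.inr ⟨i, rfl⟩⟩
  have hP'Q'0 : P' 0 = Q' 0 := Subtype.ext hPQ0
  have hQ'R'0 : Q' 0 = R' (Fin.last _) := Subtype.ext hQR0
  have hP'Q'l : P' (Fin.last _) = Q' (Fin.last _) := Subtype.ext hPQl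
  have hQ'R'l : Q' (Fin.last _) = R' 0 := Subtype.ext hQRl
  have hv_w : Reach (induceRel E T) (P' 0) (P' (Fin.last _)) :=
    reach_of_fin_path (f := P') hPe (Fin.zero_le _)
  have hw_v : Reach (induceRel E T) (P' (Fin.last _)) (P' 0) := by
    rw [hP'Q'l, hQ'R'l, hP'Q'0, hQ'R'0]
    exact reach_of_fin_path (f := R') hRe (Fin.zero_le _)
  refine ⟨T, ncard_theta hP hQ hR hPQ0 hQR0 hPQl hQRl hPQ hPR hQR,
    stronglyConnected_of_hub (P' 0) ?_ ?_, P' 0, P' 1, Q' 1, ?_, ?_, ?_⟩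
  · rintro ⟨_, (⟨i, rfl⟩ | ⟨i, rfl⟩) | ⟨i, rfl⟩⟩
    · change Reach _ (P' i) _
      exact (reach_of_fin_path (f := P') hPe (Fin.le_last i)).trans hw_v
    · change Reach _ (Q' i) _
      refine (reach_of_fin_path (f := Q') hQe (Fin.le_last i)).trans ?_
      rw [← hP'Q'l]
      exact hw_v
    · change Reach _ (R' i) _
      rw [hP'Q'0, hQ'R'0]
      exact reach_of_fin_path (f := R') hRe (Fin.le_last i)
  · rintro ⟨_, (⟨i, rfl⟩ | ⟨i, rfl⟩) | ⟨i, rfl⟩⟩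
    · exact reach_of_fin_path (f := P') hPe (Fin.zero_le i)
    · change Reach _ _ (Q' i)
      rw [hP'Q'0]
      exact reach_of_fin_path (f := Q') hQe (Fin.zero_le i)
    · change Reach _ _ (R' i)
      refine hv_w.trans ?_
      rw [hP'Q'l, hQ'R'l]
      exact reach_of_fin_path (f := R') hRe (Fin.zero_le i)
  · intro h
    rcases hPQ 1 1 (congrArg Subtype.val h) with ⟨h0, -⟩ | ⟨-, hl⟩
    · simp at h0
    · simp [Fin.ext_iff] at hl
      omega
  · change E (P 0) (P 1)
    simpa using hPe 0
  · change E (P 0) (Q 1)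
    simpa [hPQ0] using hQe 0

end Theta

theorem stmt18_general {V : Type*} [Fintype V] (E : V → V → Prop) (a b c : ℕ)
    (hb : 0 < b) (hloop : ∀ v, ¬ E v v) (hsc : StronglyConnected E)
    (h3 : (compSpec (adjMat E)).ncard = 3) (hsub : ThetaSub E a b c) :
    Fintype.card V = a + b + c + 2 := by
  obtain ⟨T, hcard, hT, v, u₁, u₂, hne, h₁, h₂⟩ := hsub.exists_induced hb
  rw [← hcard, eq_univ_of_ncard_compSpec_eq_three hloop hsc h3 hT hne h₁ h₂, Set.ncard_univ,
    Nat.card_eq_fintype_card]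

/-- a strongly connected digraph with exactly three complementarity
eigenvalues containing a `θ(a,b,c)`-subdigraph has exactly `a + b + c + 2` vertices. -/
theorem stmt18 {V : Type*} [Fintype V] (E : V → V → Prop) (a b c : ℕ)
    (hab : a ≤ b) (hb : 0 < b) (hloop : ∀ v, ¬ E v v) (hsc : StronglyConnected E)
    (h3 : (compSpec (adjMat E)).ncard = 3) (hsub : ThetaSub E a b c) :
    Fintype.card V = a + b + c + 2 :=
  stmt18_general E a b c hb hloop hsc h3 hsub
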